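/- Let u₁(t) = tanh(t/√2) and suppose ω ∈ L^∞(ℝ) solves -ω'' + W''(u₁)·ω = 0 on ℝ, where W(s) = (1-s²)²/4. Then ω is a scalar multiple of u₁'. -/

import Mathlib

/-!
Since `u₁'` solves the same equation as `ω`, their Wronskian `ω (u₁')' - ω' u₁'` is constant.
The potential is bounded, so `ω''` is bounded along with `ω`, and by the mean value theorem so
is `ω'`; as `u₁'` and `u₁''` decay at `+∞`, the Wronskian tends to `0` and hence vanishes
identically, which makes `ω / u₁'` constant.
-/

open Real Filter Topology

noncomputable def wronskian (f g : ℝ → ℝ) (t : ℝ) : ℝ := f t * deriv g t - deriv f t * g t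

section Wronskian

variable {q f g : ℝ → ℝ}

theorem abs_deriv_le_of_abs_le_of_abs_deriv_deriv_le {A B : ℝ} (hf : Differentiable ℝ f)
    (hf' : Differentiable ℝ (deriv f)) (hA : ∀ t, |f t| ≤ A) (hB : ∀ t, |deriv (deriv f) t| ≤ B)
    (t : ℝ) : |deriv f t| ≤ 2 * A + B := by
  obtain ⟨ξ, ⟨htξ, hξt⟩, hξ⟩ := exists_deriv_eq_slope f (lt_add_one t) hf.continuous.continuousOn
    (fun x _ => (hf x).differentiableWithinAt)
  have hslope : |deriv f ξ| ≤ 2 * A := by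
    rw [hξ, add_sub_cancel_left, div_one]
    linarith [abs_sub (f (t + 1)) (f t), hA (t + 1), hA t]
  have hlip : |deriv f ξ - deriv f t| ≤ B * |ξ - t| :=
    Convex.norm_image_sub_le_of_norm_deriv_le (fun x _ => hf' x) (fun x _ => hB x) convex_univ
      trivial trivial
  have hξ1 : |ξ - t| ≤ 1 := by rw [abs_of_pos (by linarith)]; linarith
  have hB0 : 0 ≤ B := (abs_nonneg _).trans (hB t)
  linarith [abs_sub_abs_le_abs_sub (deriv f t) (deriv f ξ), abs_sub_comm (deriv f t) (deriv f ξ),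
    mul_le_mul_of_nonneg_left hξ1 hB0]

theorem wronskian_eq_of_deriv_deriv_eq_mul (hf : Differentiable ℝ f)
    (hf' : Differentiable ℝ (deriv f)) (hg : Differentiable ℝ g)
    (hg' : Differentiable ℝ (deriv g)) (hfq : ∀ t, deriv (deriv f) t = q t * f t)
    (hgq : ∀ t, deriv (deriv g) t = q t * g t) (s t : ℝ) :
    wronskian f g s = wronskian f g t := by
  have hW : ∀ t, HasDerivAt (wronskian f g) 0 t := fun t => by
    have : HasDerivAt (wronskian f g) _ t :=
      ((hf t).hasDerivAt.mul (hg' t).hasDerivAt).sub ((hf' t).hasDerivAt.mul (hg t).hasDerivAt)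
    exact this.congr_deriv (by rw [hfq, hgq]; ring)
  exact is_const_of_deriv_eq_zero (fun t => (hW t).differentiableAt) (fun t => (hW t).deriv) s t

theorem tendsto_wronskian_atTop_zero {A B : ℝ} (hA : ∀ t, |f t| ≤ A) (hB : ∀ t, |deriv f t| ≤ B)
    (hg : Tendsto g atTop (𝓝 0)) (hg' : Tendsto (deriv g) atTop (𝓝 0)) :
    Tendsto (wronskian f g) atTop (𝓝 0) := by
  have h₁ := isBoundedUnder_le_mul_tendsto_zero (isBoundedUnder_of ⟨A, hA⟩) hg'
  have h₂ := isBoundedUnder_le_mul_tendsto_zero (isBoundedUnder_of ⟨B, hB⟩) hg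
  rw [← sub_zero (0 : ℝ)]
  exact h₁.sub h₂

theorem exists_eq_const_mul_of_wronskian_eq_zero (hf : Differentiable ℝ f)
    (hg : Differentiable ℝ g) (hg0 : ∀ t, g t ≠ 0) (hW : ∀ t, wronskian f g t = 0) :
    ∃ a, ∀ t, f t = a * g t := by
  have hquot : ∀ t, HasDerivAt (fun t => f t / g t) 0 t := fun t => by
    refine ((hf t).hasDerivAt.div (hg t).hasDerivAt (hg0 t)).congr_deriv ?_
    rw [show deriv f t * g t - f t * deriv g t = -wronskian f g t by rw [wronskian]; ring, hW t,
      neg_zero, zero_div]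
  refine ⟨f 0 / g 0, fun t => ?_⟩
  rw [← is_const_of_deriv_eq_zero (fun t => (hquot t).differentiableAt)
    (fun t => (hquot t).deriv) t 0, div_mul_cancel₀ _ (hg0 t)]

theorem exists_eq_const_mul_of_bounded_solution {A M : ℝ}
    (hf : Differentiable ℝ f) (hf' : Differentiable ℝ (deriv f)) (hg : Differentiable ℝ g)
    (hg' : Differentiable ℝ (deriv g)) (hfq : ∀ t, deriv (deriv f) t = q t * f t)
    (hgq : ∀ t, deriv (deriv g) t = q t * g t) (hA : ∀ t, |f t| ≤ A) (hM : ∀ t, |q t| ≤ M)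
    (hg0 : ∀ t, g t ≠ 0) (hg_lim : Tendsto g atTop (𝓝 0))
    (hg'_lim : Tendsto (deriv g) atTop (𝓝 0)) :
    ∃ a, ∀ t, f t = a * g t := by
  have hf'' : ∀ t, |deriv (deriv f) t| ≤ M * A := fun t => by
    rw [hfq, abs_mul]
    exact mul_le_mul (hM t) (hA t) (abs_nonneg _) ((abs_nonneg _).trans (hM t))
  have hlim := tendsto_wronskian_atTop_zero hA
    (abs_deriv_le_of_abs_le_of_abs_deriv_deriv_le hf hf' hA hf'') hg_lim hg'_lim
  refine exists_eq_const_mul_of_wronskian_eq_zero hf hg hg0 fun t => ?_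
  have hconst : wronskian f g = fun _ => wronskian f g t :=
    funext fun s => wronskian_eq_of_deriv_deriv_eq_mul hf hf' hg hg' hfq hgq s t
  rw [hconst] at hlim
  exact tendsto_nhds_unique tendsto_const_nhds hlim

end Wronskian

theorem Real.hasDerivAt_tanh (x : ℝ) : HasDerivAt tanh (1 - tanh x ^ 2) x := by
  have h := (hasDerivAt_sinh x).div (hasDerivAt_cosh x) (cosh_pos x).ne'
  rw [show tanh = fun y => sinh y / cosh y from funext tanh_eq_sinh_div_cosh]
  refine h.congr_deriv ?_
  simp only
  field_simp

theorem Real.tendsto_one_sub_tanh_sq_atTop : Tendsto (fun x => 1 - tanh x ^ 2) atTop (𝓝 0) := by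
  have hcosh : Tendsto cosh atTop atTop :=
    tendsto_atTop_mono' atTop ((eventually_ge_atTop 0).mono fun x hx =>
      (self_le_sinh_iff.2 hx).trans (sinh_lt_cosh x).le) tendsto_id
  refine (tendsto_inv_atTop_zero.comp ((tendsto_pow_atTop two_ne_zero).comp hcosh)).congr
    fun x => ?_
  have := (cosh_pos x).ne'
  simp only [Function.comp_apply, tanh_eq_sinh_div_cosh]
  field_simp
  linarith [cosh_sq_sub_sinh_sq x]

noncomputable def kink (t : ℝ) : ℝ := tanh (t / √2)

theorem kink_sq_lt_one (t : ℝ) : kink t ^ 2 < 1 := tanh_sq_lt_one _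

theorem hasDerivAt_kink (t : ℝ) : HasDerivAt kink ((1 - kink t ^ 2) / √2) t := by
  have := (hasDerivAt_tanh (t / √2)).comp t ((hasDerivAt_id t).div_const √2)
  exact this.congr_deriv (by simp only [kink]; ring)

theorem deriv_kink : deriv kink = fun t => (1 - kink t ^ 2) / √2 :=
  funext fun t => (hasDerivAt_kink t).deriv

theorem hasDerivAt_deriv_kink (t : ℝ) :
    HasDerivAt (deriv kink) (-(kink t * (1 - kink t ^ 2))) t := by
  rw [deriv_kink]
  refine ((((hasDerivAt_kink t).fun_pow 2).const_sub 1).div_const √2).congr_deriv ?_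
  have := sq_sqrt (zero_le_two : (0 : ℝ) ≤ 2)
  field_simp
  rw [this]
  ring

theorem deriv_deriv_kink : deriv (deriv kink) = fun t => -(kink t * (1 - kink t ^ 2)) :=
  funext fun t => (hasDerivAt_deriv_kink t).deriv

theorem hasDerivAt_deriv_deriv_kink (t : ℝ) :
    HasDerivAt (deriv (deriv kink)) ((3 * kink t ^ 2 - 1) * deriv kink t) t := by
  rw [deriv_deriv_kink, deriv_kink]
  exact (((hasDerivAt_kink t).mul (((hasDerivAt_kink t).fun_pow 2).const_sub 1)).neg).congr_deriv
    (by ring)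

theorem deriv_kink_pos (t : ℝ) : 0 < deriv kink t := by
  rw [deriv_kink]
  exact div_pos (by linarith [kink_sq_lt_one t]) (by positivity)

theorem tendsto_one_sub_kink_sq_atTop : Tendsto (fun t => 1 - kink t ^ 2) atTop (𝓝 0) :=
  tendsto_one_sub_tanh_sq_atTop.comp (tendsto_id.atTop_div_const (by positivity))

theorem tendsto_deriv_kink_atTop : Tendsto (deriv kink) atTop (𝓝 0) := by
  rw [deriv_kink, ← zero_div √2]
  exact tendsto_one_sub_kink_sq_atTop.div_const _

theorem tendsto_deriv_deriv_kink_atTop : Tendsto (deriv (deriv kink)) atTop (𝓝 0) := by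
  refine squeeze_zero_norm (fun t => ?_) tendsto_one_sub_kink_sq_atTop
  have h₁ : |kink t| ≤ 1 := (abs_tanh_lt_one _).le
  have h₀ : 0 ≤ 1 - kink t ^ 2 := by linarith [kink_sq_lt_one t]
  rw [deriv_deriv_kink, Real.norm_eq_abs, abs_neg, abs_mul, abs_of_nonneg h₀]
  exact mul_le_of_le_one_left h₀ h₁

/-- Any bounded solution of the linearized equation `-ω'' + W''(u₁)·ω = 0` on `ℝ`
is a scalar multiple of `u₁'`, where `u₁(t) = tanh(t/√2)` and `W''(s) = 3s² - 1`. -/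
theorem stmt_12 (u₁ : ℝ → ℝ) (hu : ∀ t, u₁ t = Real.tanh (t / Real.sqrt 2))
    (ω : ℝ → ℝ) (hsmooth : ContDiff ℝ 2 ω)
    (hbdd : ∃ C, ∀ t, |ω t| ≤ C)
    (heq : ∀ t, -(deriv (deriv ω) t) + (3 * (u₁ t) ^ 2 - 1) * ω t = 0) :
    ∃ a : ℝ, ∀ t, ω t = a * deriv u₁ t := by
  obtain ⟨C, hC⟩ := hbdd
  obtain rfl : u₁ = kink := funext hu
  have hω' : Differentiable ℝ (deriv ω) :=
    (contDiff_succ_iff_deriv.mp (hsmooth : ContDiff ℝ (1 + 1) ω)).2.2.differentiable one_ne_zero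
  have hpotential : ∀ t, |3 * kink t ^ 2 - 1| ≤ 2 := fun t => by
    rw [abs_le]; constructor <;> nlinarith [kink_sq_lt_one t, sq_nonneg (kink t)]
  exact exists_eq_const_mul_of_bounded_solution (hsmooth.differentiable two_ne_zero) hω'
    (fun t => (hasDerivAt_deriv_kink t).differentiableAt)
    (fun t => (hasDerivAt_deriv_deriv_kink t).differentiableAt) (fun t => by linarith [heq t])
    (fun t => (hasDerivAt_deriv_deriv_kink t).deriv) hC hpotential
    (fun t => (deriv_kink_pos t).ne') tendsto_deriv_kink_atTop tendsto_deriv_deriv_kink_atTop
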